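/- (Abstract form of the Corollary: H¹ estimate under a Gårding inequality, without inverse inequalities.) Assume V_h = W_h. For every choice of constants C_G, λ, c_a, C₀, K₁, K₂ ≥ 0 there exists a constant C > 0, depending only on these constants, with the following property. Let k ≥ 1 be a natural number, let 0 < h ≤ 1, 0 ≤ ε ≤ 1, M ≥ 0, let u ∈ X, πu ∈ V_h, (u_h, z_h) ∈ V_h × W_h, and set ξ_h := πu − u_h. Assume: (i) the Gårding-type inequality G(v_h)² ≤ C_G ( a_h(v_h, v_h) + s_p(v_h, v_h) ) + λ ‖v_h‖² for all v_h ∈ V_h; (ii) s_a(x, y) = s_p(x, y) for all x, y ∈ X; (iii) Galerkin orthogonality: a_h(u − u_h, w_h) = s_a(z_h, w_h) for all w_h ∈ W_h; (iv) continuity: |a_h(u − πu, x_h)| ≤ C₀ h^k M · (c_a |x_h|_{S_a} + ε ‖x_h‖) for all x_h ∈ W_h; (v) the bounds |ξ_h|_{S_p} ≤ K₁ h^k M, |z_h|_{S_a} ≤ K₁ h^k M, ‖ξ_h‖ ≤ K₂ h^{k+1} M; (vi) the interpolation bound G(u − πu) ≤ C₀ h^k M. Then G(u − u_h) ≤ C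 h^k M. -/
import Mathlib


open scoped RealInnerProductSpace

lemma bilin_cs {X : Type*} [AddCommGroup X] [Module ℝ X]
    (s : LinearMap.BilinForm ℝ X) (hsymm : ∀ x y : X, s x y = s y x)
    (hpos : ∀ x : X, 0 ≤ s x x) (x y : X) :
    s x y ≤ Real.sqrt (s x x) * Real.sqrt (s y y) := by
  have key : ∀ t : ℝ, 0 ≤ (s y y) * (t * t) + (2 * s x y) * t + s x x := by
    intro t
    have h0 := hpos (x + t • y)
    have hexp : s (x + t • y) (x + t • y)
        = (s y y) * (t * t) + (2 * s x y) * t + s x x := by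
      simp only [map_add, map_smul, LinearMap.add_apply, LinearMap.smul_apply,
        smul_eq_mul]
      rw [hsymm y x]
      ring
    linarith [hexp ▸ h0]
  have hdisc : discrim (s y y) (2 * s x y) (s x x) ≤ 0 := discrim_le_zero key
  rw [discrim] at hdisc
  have hsq : (s x y) ^ 2 ≤ s x x * s y y := by nlinarith
  calc s x y ≤ |s x y| := le_abs_self _
    _ = Real.sqrt ((s x y) ^ 2) := (Real.sqrt_sq_eq_abs _).symm
    _ ≤ Real.sqrt (s x x * s y y) := Real.sqrt_le_sqrt hsq
    _ = Real.sqrt (s x x) * Real.sqrt (s y y) := Real.sqrt_mul (hpos x) _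

/-- Abstract form of the Corollary: `H¹` estimate under a Gårding inequality,
without inverse inequalities. Here `V_h = W_h = V`. -/
theorem H1_error_estimate_garding
    {X : Type*} [NormedAddCommGroup X] [InnerProductSpace ℝ X]
    (V : Submodule ℝ X)
    (a_h s_p s_a : LinearMap.BilinForm ℝ X)
    (hsp_symm : ∀ x y : X, s_p x y = s_p y x)
    (hsa_symm : ∀ x y : X, s_a x y = s_a y x)
    (hsp_pos : ∀ x : X, 0 ≤ s_p x x)
    (hsa_pos : ∀ x : X, 0 ≤ s_a x x)
    (G : Seminorm ℝ X) :
    ∀ C_G lam c_a C₀ K₁ K₂ : ℝ,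
      0 ≤ C_G → 0 ≤ lam → 0 ≤ c_a → 0 ≤ C₀ → 0 ≤ K₁ → 0 ≤ K₂ →
    ∃ C > (0 : ℝ),
      ∀ (k : ℕ), 1 ≤ k →
      ∀ (h ε M : ℝ), 0 < h → h ≤ 1 → 0 ≤ ε → ε ≤ 1 → 0 ≤ M →
      ∀ (u πu u_h z_h : X), πu ∈ V → u_h ∈ V → z_h ∈ V →
      -- (i) Gårding-type inequality
      (∀ v_h ∈ V, G v_h ^ 2 ≤ C_G * (a_h v_h v_h + s_p v_h v_h) + lam * ‖v_h‖ ^ 2) →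
      -- (ii) the two stabilisations coincide
      (∀ x y : X, s_a x y = s_p x y) →
      -- (iii) Galerkin orthogonality
      (∀ w_h ∈ V, a_h (u - u_h) w_h = s_a z_h w_h) →
      -- (iv) continuity
      (∀ x_h ∈ V,
        |a_h (u - πu) x_h|
          ≤ C₀ * h ^ k * M * (c_a * Real.sqrt (s_a x_h x_h) + ε * ‖x_h‖)) →
      -- (v) bounds on the discrete error `ξ_h := πu − u_h` and on `z_h`
      Real.sqrt (s_p (πu - u_h) (πu - u_h)) ≤ K₁ * h ^ k * M →
      Real.sqrt (s_a z_h z_h) ≤ K₁ * h ^ k * M →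
      ‖πu - u_h‖ ≤ K₂ * h ^ (k + 1) * M →
      -- (vi) interpolation bound
      G (u - πu) ≤ C₀ * h ^ k * M →
      G (u - u_h) ≤ C * h ^ k * M := by
  intro C_G lam c_a C₀ K₁ K₂ hCG hlam hca hC0 hK1 hK2
  refine ⟨1 + C₀ + Real.sqrt (C_G * (C₀ * (c_a * K₁ + K₂) + 2 * K₁ ^ 2) + lam * K₂ ^ 2),
    by positivity, ?_⟩
  intro k hk h ε M hh h1 hε0 hε1 hM u πu u_h z_h hπ hu hz hGard hcoin hGal hcont hspb hsab hnb hinterp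
  set D := C_G * (C₀ * (c_a * K₁ + K₂) + 2 * K₁ ^ 2) + lam * K₂ ^ 2 with hDdef
  have hD0 : 0 ≤ D := by positivity
  set ξ := πu - u_h with hξ
  have hξV : ξ ∈ V := Submodule.sub_mem V hπ hu
  set P := h ^ k * M with hPdef
  have hP0 : 0 ≤ P := by positivity
  have hpow : h ^ (k + 1) ≤ h ^ k := pow_le_pow_of_le_one (le_of_lt hh) h1 (Nat.le_succ k)
  have hnorm : ‖ξ‖ ≤ K₂ * P := by
    refine le_trans hnb ?_
    have h4 : K₂ * h ^ (k + 1) * M ≤ K₂ * h ^ k * M :=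
      mul_le_mul_of_nonneg_right (mul_le_mul_of_nonneg_left hpow hK2) hM
    have h5 : K₂ * h ^ k * M = K₂ * P := by rw [hPdef]; ring
    linarith
  have hspξ : Real.sqrt (s_p ξ ξ) ≤ K₁ * P := by
    refine le_trans hspb (le_of_eq ?_); ring
  have hsaξ : Real.sqrt (s_a ξ ξ) ≤ K₁ * P := by
    rw [hcoin]; exact hspξ
  have hsaz : Real.sqrt (s_a z_h z_h) ≤ K₁ * P := by
    refine le_trans hsab (le_of_eq ?_); ring
  -- s_p ξ ξ ≤ (K₁ P)^2
  have hspξ2 : s_p ξ ξ ≤ (K₁ * P) ^ 2 := by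
    have h1' : s_p ξ ξ = Real.sqrt (s_p ξ ξ) ^ 2 := (Real.sq_sqrt (hsp_pos ξ)).symm
    rw [h1']
    exact pow_le_pow_left₀ (Real.sqrt_nonneg _) hspξ 2
  -- Cauchy-Schwarz bound on s_a z_h ξ
  have hcs : s_a z_h ξ ≤ (K₁ * P) ^ 2 := by
    calc s_a z_h ξ ≤ Real.sqrt (s_a z_h z_h) * Real.sqrt (s_a ξ ξ) :=
          bilin_cs s_a hsa_symm hsa_pos z_h ξ
      _ ≤ (K₁ * P) * (K₁ * P) := by
          exact mul_le_mul hsaz hsaξ (Real.sqrt_nonneg _) (by positivity)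
      _ = (K₁ * P) ^ 2 := by ring
  -- a_h ξ ξ decomposition
  have hdecomp : a_h ξ ξ = -(a_h (u - πu) ξ) + s_a z_h ξ := by
    have hsplit : ξ = (πu - u) + (u - u_h) := by rw [hξ]; abel
    have : a_h ξ ξ = a_h (πu - u) ξ + a_h (u - u_h) ξ := by
      nth_rewrite 1 [hsplit]
      rw [map_add a_h (πu - u) (u - u_h), LinearMap.add_apply]
    rw [this, hGal ξ hξV]
    have : a_h (πu - u) ξ = -(a_h (u - πu) ξ) := by
      have : (πu - u : X) = -(u - πu) := by abel
      rw [this]; simp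
    rw [this]
  -- continuity bound
  have hcb : |a_h (u - πu) ξ| ≤ C₀ * P * (c_a * (K₁ * P) + K₂ * P) := by
    refine le_trans (hcont ξ hξV) ?_
    have h1' : c_a * Real.sqrt (s_a ξ ξ) ≤ c_a * (K₁ * P) :=
      mul_le_mul_of_nonneg_left hsaξ hca
    have h2' : ε * ‖ξ‖ ≤ K₂ * P := by
      have := mul_le_mul hε1 hnorm (norm_nonneg ξ) zero_le_one
      linarith
    have h3' : C₀ * h ^ k * M = C₀ * P := by ring
    rw [h3']
    exact mul_le_mul_of_nonneg_left (by linarith) (by positivity)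
  have haξ : a_h ξ ξ ≤ C₀ * P * (c_a * (K₁ * P) + K₂ * P) + (K₁ * P) ^ 2 := by
    rw [hdecomp]
    have := neg_le_abs (a_h (u - πu) ξ)
    linarith [hcb, hcs]
  -- norm bound squared
  have hn2 : ‖ξ‖ ^ 2 ≤ (K₂ * P) ^ 2 :=
    pow_le_pow_left₀ (norm_nonneg ξ) hnorm 2
  -- Gårding
  have hG2 : G ξ ^ 2 ≤ D * P ^ 2 := by
    refine le_trans (hGard ξ hξV) ?_
    have e : D * P ^ 2 =
        C_G * ((C₀ * P * (c_a * (K₁ * P) + K₂ * P) + (K₁ * P) ^ 2) + (K₁ * P) ^ 2)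
          + lam * (K₂ * P) ^ 2 := by rw [hDdef]; ring
    rw [e]
    exact add_le_add
      (mul_le_mul_of_nonneg_left (add_le_add haξ hspξ2) hCG)
      (mul_le_mul_of_nonneg_left hn2 hlam)
  have hGξ : G ξ ≤ Real.sqrt D * P := by
    have h1' : G ξ = Real.sqrt (G ξ ^ 2) := (Real.sqrt_sq (apply_nonneg G ξ)).symm
    rw [h1']
    calc Real.sqrt (G ξ ^ 2) ≤ Real.sqrt (D * P ^ 2) := Real.sqrt_le_sqrt hG2
      _ = Real.sqrt D * Real.sqrt (P ^ 2) := Real.sqrt_mul hD0 _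
      _ = Real.sqrt D * P := by rw [Real.sqrt_sq hP0]
  -- conclude
  have htri : G (u - u_h) ≤ G (u - πu) + G ξ := by
    have : (u - u_h : X) = (u - πu) + ξ := by rw [hξ]; abel
    rw [this]; exact map_add_le_add G _ _
  have hfin : G (u - u_h) ≤ (1 + C₀ + Real.sqrt D) * P := by
    have h3' : C₀ * h ^ k * M = C₀ * P := by rw [hPdef]; ring
    rw [h3'] at hinterp
    have h6 : (1 + C₀ + Real.sqrt D) * P = P + (C₀ * P + Real.sqrt D * P) := by ring
    linarith
  calc G (u - u_h) ≤ (1 + C₀ + Real.sqrt D) * P := hfin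
    _ = (1 + C₀ + Real.sqrt D) * h ^ k * M := by rw [hPdef]; ring
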